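/- arXiv:math/0305095 — 2 statements merged into one kernel-verified Lean document; each statement's English description precedes it below -/
import Mathlib

section
/- Let λ < μ be dominant coweights of an irreducible root system such that the pair (λ, μ) is a minimal degeneration (i.e., μ covers λ in the dominance order restricted to dominant coweights). Then the support of μ − λ, i.e., the set of simple coroots appearing with nonzero coefficient in μ − λ, spans a connected subdiagram of the Dynkin diagram. -/
/-!
If the support of `μ - λ = ∑ cₖ α̌ₖ` were disconnected, split `c = d + e` with `d` the part
on the component of a support vertex. No Cartan entry links the support of `d` to that of
`e`, so `ν = λ + ∑ dₖ α̌ₖ` is dominant: on the support of `e` it agrees with `λ`, and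
elsewhere it is at least `μ`, because there `∑ eₖ α̌ₖ` only has nonpositive off-diagonal
contributions. Since `λ ≤ ν ≤ μ`, minimality forces `∑ dₖ α̌ₖ = 0` or `∑ eₖ α̌ₖ = 0`, and
linear independence of the simple coroots makes `d` or `e` vanish, which is absurd.
-/

open Relation

section

variable {I : Type} {A : Matrix I I ℤ}

/-- The connected component of `i` in the subdiagram spanned by the support of `c`
(just `{i}` when `c i = 0`). -/
def supportComponent (A : Matrix I I ℤ) (c : I → ℕ) (i : I) : Set I :=
  {k | ReflTransGen (fun a b => c a ≠ 0 ∧ c b ≠ 0 ∧ A a b ≠ 0) i k}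

lemma ne_zero_of_mem_supportComponent {c : I → ℕ} {i k : I} (hi : c i ≠ 0)
    (hk : k ∈ supportComponent A c i) : c k ≠ 0 := by
  induction hk with
  | refl => exact hi
  | tail _ hab _ => exact hab.2.1

lemma apply_eq_zero_of_mem_supportComponent_of_notMem {c : I → ℕ} {i k x : I} (hi : c i ≠ 0)
    (hk : k ∈ supportComponent A c i) (hx : x ∉ supportComponent A c i) (hcx : c x ≠ 0) :
    A k x = 0 := by
  by_contra hkx
  exact hx (ReflTransGen.tail hk ⟨ne_zero_of_mem_supportComponent hi hk, hcx, hkx⟩)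

variable [Fintype I]

lemma sum_smul_rows_apply_eq_zero {d : I → ℕ} {x : I} (h : ∀ k, d k ≠ 0 → A k x = 0) :
    (∑ k, (d k : ℤ) • A k) x = 0 := by
  rw [Finset.sum_apply]
  refine Finset.sum_eq_zero fun k _ => ?_
  by_cases hk : d k = 0 <;> simp [hk, h]

lemma sum_smul_rows_apply_nonpos (hoff : ∀ i j, i ≠ j → A i j ≤ 0) {d : I → ℕ} {x : I}
    (hx : d x = 0) : (∑ k, (d k : ℤ) • A k) x ≤ 0 := by
  rw [Finset.sum_apply]
  refine Finset.sum_nonpos fun k _ => ?_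
  rcases eq_or_ne k x with rfl | hkx
  · simp [hx]
  · exact mul_nonpos_of_nonneg_of_nonpos (Int.natCast_nonneg _) (hoff k x hkx)

lemma eq_zero_of_sum_smul_rows_eq_zero (hind : LinearIndependent ℤ (fun i => (A i : I → ℤ)))
    {d : I → ℕ} (h : ∑ k, (d k : ℤ) • A k = 0) : d = 0 := by
  funext k
  exact_mod_cast Fintype.linearIndependent_iff.mp hind (fun k => (d k : ℤ)) h k

lemma sum_smul_rows_eq_indicator_add_compl (c : I → ℕ) (S : Set I) :
    ∑ k, (c k : ℤ) • A k =
      ∑ k, ((S.indicator c k : ℕ) : ℤ) • A k + ∑ k, ((Sᶜ.indicator c k : ℕ) : ℤ) • A k := by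
  rw [← Finset.sum_add_distrib]
  refine Finset.sum_congr rfl fun k _ => ?_
  rw [← add_smul, ← Nat.cast_add, Set.indicator_self_add_compl_apply]

lemma dominant_add_of_separated (hoff : ∀ i j, i ≠ j → A i j ≤ 0) {lam mu : I → ℤ}
    (hlam : ∀ j, 0 ≤ lam j) (hmu : ∀ j, 0 ≤ mu j) {d e : I → ℕ}
    (hsplit : mu = lam + ∑ k, (d k : ℤ) • A k + ∑ k, (e k : ℤ) • A k)
    (hsep : ∀ k x, d k ≠ 0 → e x ≠ 0 → A k x = 0) (x : I) :
    0 ≤ (lam + ∑ k, (d k : ℤ) • A k) x := by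
  by_cases hx : e x = 0
  · have hmux := congrFun hsplit x
    have he := sum_smul_rows_apply_nonpos hoff hx
    simp only [Pi.add_apply] at hmux he ⊢
    linarith [hmu x]
  · rw [Pi.add_apply, sum_smul_rows_apply_eq_zero fun k hk => hsep k x hk hx, add_zero]
    exact hlam x

lemma eq_zero_or_eq_zero_of_separated_of_minimal (hoff : ∀ i j, i ≠ j → A i j ≤ 0)
    (hind : LinearIndependent ℤ (fun i => (A i : I → ℤ))) {lam mu : I → ℤ}
    (hlam : ∀ j, 0 ≤ lam j) (hmu : ∀ j, 0 ≤ mu j)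
    (hmin : ∀ ν : I → ℤ, (∀ j, 0 ≤ ν j) →
      (∃ d : I → ℕ, ν = lam + ∑ k, (d k : ℤ) • A k) →
      (∃ d : I → ℕ, mu = ν + ∑ k, (d k : ℤ) • A k) →
      ν = lam ∨ ν = mu)
    {d e : I → ℕ} (hsplit : mu = lam + ∑ k, (d k : ℤ) • A k + ∑ k, (e k : ℤ) • A k)
    (hsep : ∀ k x, d k ≠ 0 → e x ≠ 0 → A k x = 0) :
    d = 0 ∨ e = 0 := by
  rcases hmin _ (dominant_add_of_separated hoff hlam hmu hsplit hsep) ⟨d, rfl⟩ ⟨e, hsplit⟩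
    with h | h
  · exact .inl (eq_zero_of_sum_smul_rows_eq_zero hind (add_eq_left.mp h))
  · rw [← h] at hsplit
    exact .inr (eq_zero_of_sum_smul_rows_eq_zero hind (left_eq_add.mp hsplit))

end

theorem support_of_minimal_degeneration_connected_general
    (I : Type) [Fintype I] (A : Matrix I I ℤ)
    (hoff : ∀ i j, i ≠ j → A i j ≤ 0)
    (hind : LinearIndependent ℤ (fun i => (A i : I → ℤ)))
    (lam mu : I → ℤ)
    (hlam : ∀ j, 0 ≤ lam j) (hmu : ∀ j, 0 ≤ mu j)      -- λ, μ dominant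
    (c : I → ℕ) (hc : mu = lam + ∑ k, (c k : ℤ) • A k)  -- λ ≤ μ, with coefficients c
    -- minimal degeneration: no dominant coweight lies strictly between λ and μ
    (hmin : ∀ ν : I → ℤ, (∀ j, 0 ≤ ν j) →
      (∃ d : I → ℕ, ν = lam + ∑ k, (d k : ℤ) • A k) →
      (∃ d : I → ℕ, mu = ν + ∑ k, (d k : ℤ) • A k) →
      ν = lam ∨ ν = mu) :
    ∀ i j : I, c i ≠ 0 → c j ≠ 0 →
      Relation.ReflTransGen (fun a b => c a ≠ 0 ∧ c b ≠ 0 ∧ A a b ≠ 0) i j := by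
  intro i j hi hj
  by_contra hij
  set S := supportComponent A c i
  have hsplit : mu = lam + ∑ k, ((S.indicator c k : ℕ) : ℤ) • A k
      + ∑ k, ((Sᶜ.indicator c k : ℕ) : ℤ) • A k := by
    rw [hc, sum_smul_rows_eq_indicator_add_compl c S, add_assoc]
  have hsep : ∀ k x, S.indicator c k ≠ 0 → Sᶜ.indicator c x ≠ 0 → A k x = 0 := by
    intro k x hk hx
    obtain ⟨hxS, hcx⟩ := Set.indicator_apply_ne_zero.mp hx
    exact apply_eq_zero_of_mem_supportComponent_of_notMem hi
      (Set.mem_of_indicator_ne_zero hk) hxS hcx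
  rcases eq_zero_or_eq_zero_of_separated_of_minimal hoff hind hlam hmu hmin hsplit hsep
    with h | h
  · exact hi (by simpa [Set.indicator_of_mem (show i ∈ S from .refl)] using congrFun h i)
  · exact hj (by simpa [Set.indicator_of_mem (show j ∈ Sᶜ from hij)] using congrFun h j)

/-- For a minimal degeneration `λ < μ` of dominant coweights of an
irreducible root system (same encoding as via the Cartan matrix `A`: coweights in
fundamental-coweight coordinates, simple coroot `α̌ᵢ = A i ·`, dominance order given by
nonnegative integer combinations of simple coroots), the support of `μ - λ` — the set of
indices occurring with nonzero coefficient `c` in `μ - λ = ∑ cₖ α̌ₖ` — spans a connected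
subdiagram of the Dynkin diagram (two vertices being adjacent iff the corresponding
Cartan matrix entry is nonzero). -/
theorem support_of_minimal_degeneration_connected
    (I : Type) [Fintype I] [DecidableEq I] (A : Matrix I I ℤ)
    (hdiag : ∀ i, A i i = 2)
    (hoff : ∀ i j, i ≠ j → A i j ≤ 0)
    (hzero : ∀ i j, A i j = 0 ↔ A j i = 0)
    (hirr : ∀ i j : I, Relation.ReflTransGen (fun a b => A a b ≠ 0) i j)
    (hind : LinearIndependent ℤ (fun i => (A i : I → ℤ)))
    (lam mu : I → ℤ)
    (hlam : ∀ j, 0 ≤ lam j) (hmu : ∀ j, 0 ≤ mu j)      -- λ, μ dominant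
    (c : I → ℕ) (hc : mu = lam + ∑ k, (c k : ℤ) • A k)  -- λ ≤ μ, with coefficients c
    (hne : lam ≠ mu)
    -- minimal degeneration: no dominant coweight lies strictly between λ and μ
    (hmin : ∀ ν : I → ℤ, (∀ j, 0 ≤ ν j) →
      (∃ d : I → ℕ, ν = lam + ∑ k, (d k : ℤ) • A k) →
      (∃ d : I → ℕ, mu = ν + ∑ k, (d k : ℤ) • A k) →
      ν = lam ∨ ν = mu) :
    ∀ i j : I, c i ≠ 0 → c j ≠ 0 →
      Relation.ReflTransGen (fun a b => c a ≠ 0 ∧ c b ≠ 0 ∧ A a b ≠ 0) i j :=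
  support_of_minimal_degeneration_connected_general I A hoff hind lam mu hlam hmu c hc hmin
end

section
/- In the dominance order on dominant coweights of the root system C_n (n ≥ 2), the pair λ = ω̌_n (the fundamental coweight at the long node) and μ = λ + α̌_s, where α̌_s is the short dominant coroot of C_n, is a minimal degeneration: μ is dominant, λ < μ, and any dominant ν with λ ≤ ν ≤ μ equals λ or μ. -/
/-! In fundamental-coweight coordinates the simple coroots are the rows of the Cartan matrix,
`λ = e_n`, and the rows sum to `e_1`, so `μ = e_1 + e_n`. If `ν = λ + ∑ c_k α̌_k` and
`μ = ν + ∑ d_k α̌_k`, nondegeneracy of the Cartan matrix gives `c + d = 1`, so each `c_k` is `0`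
or `1`. Dominance of `ν` then makes `c` constant: at a node with `c_k = 0` the coordinate of `ν`
is `-(a nonnegative combination of the neighbouring c's)`, plus `1` at the long node where the
neighbour carries the coefficient `2`, so the neighbours vanish as well. Hence `ν = λ` or `ν = μ`. -/

/-- The Cartan matrix of type `C_n` (simple roots `α₁, …, α_{n-1}` short, `α_n` long;
0-indexed): `CartanC n i j = ⟨α_j, α̌_i⟩`.  The row `CartanC n i` gives the coordinates
of the simple coroot `α̌ᵢ` in the basis of fundamental coweights. -/
def CartanC (n : ℕ) : Matrix (Fin n) (Fin n) ℤ := fun i j =>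
  if i = j then 2
  else if (i : ℕ) + 1 = (j : ℕ) ∨ (j : ℕ) + 1 = (i : ℕ) then
    (if (i : ℕ) = n - 2 ∧ (j : ℕ) = n - 1 then -2 else -1)
  else 0

open Matrix

theorem vecMul_cartanC_apply {n : ℕ} (x : ℕ → ℤ) (j : Fin n) :
    ((fun k : Fin n => x k) ᵥ* CartanC n) j =
      2 * x j - (if 0 < (j : ℕ) then (if (j : ℕ) = n - 1 then 2 else 1) * x (j - 1) else 0)
        - (if (j : ℕ) + 1 < n then x (j + 1) else 0) := by
  let f : ℕ → ℤ := fun k => (if k = j then 2 * x k else 0)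
    - (if 0 < (j : ℕ) then (if k = j - 1 then (if (j : ℕ) = n - 1 then 2 else 1) * x k else 0)
        else 0)
    - (if k = j + 1 then x k else 0)
  have term (k : Fin n) : x k * CartanC n k j = f k := by
    simp only [f, CartanC, Fin.ext_iff]
    split_ifs <;> omega
  simp only [vecMul, dotProduct, term, Fin.sum_univ_eq_sum_range f, f, Finset.sum_sub_distrib,
    Finset.sum_ite_eq', Finset.mem_range, Finset.sum_ite_irrel, Finset.sum_const_zero]
  split_ifs <;> omega

theorem exists_eq_comp_val {α : Type*} [Zero α] {n : ℕ} (x : Fin n → α) :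
    ∃ y : ℕ → α, x = fun k : Fin n => y k :=
  ⟨Function.extend Fin.val x 0, funext fun k => (Fin.val_injective.extend_apply x 0 k).symm⟩

theorem sum_cartanC {n : ℕ} (hn : 2 ≤ n) :
    ∑ i, CartanC n i = fun j : Fin n => if (j : ℕ) = 0 then (1 : ℤ) else 0 := by
  ext j
  rw [← one_vecMul]
  exact (vecMul_cartanC_apply (fun _ => 1) j).trans (by split_ifs <;> omega)

/-- A left null vector `y` of the Cartan matrix satisfies `y (m + 2) = 2 y (m + 1) - y m`, hence
`y m = (m + 1) y 0`; the last column `2 y (n + 1) - 2 y n = 0` then forces `y 0 = 0`. -/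
theorem eq_zero_of_vecMul_cartanC_eq_zero {n : ℕ} (hn : 2 ≤ n) {x : Fin n → ℤ}
    (h : x ᵥ* CartanC n = 0) : x = 0 := by
  obtain ⟨y, rfl⟩ := exists_eq_comp_val x
  obtain ⟨n, rfl⟩ : ∃ m, n = m + 2 := ⟨n - 2, by omega⟩
  have col (j : Fin (n + 2)) := congrFun h j
  simp only [vecMul_cartanC_apply, Pi.zero_apply] at col
  have linear : ∀ m < n + 2, y m = (m + 1) * y 0 := by
    intro m
    induction m using Nat.twoStepInduction with
    | zero => simp
    | one =>
      have col₀ : 2 * y 0 - y 1 = 0 := by simpa using col 0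
      intro
      push_cast
      linarith
    | more m ih₀ ih₁ =>
      intro hm
      have colm : 2 * y (m + 1) - y m - y (m + 2) = 0 := by
        simpa [show m ≠ n by omega, show m + 2 < n + 2 from hm] using col ⟨m + 1, by omega⟩
      push_cast at ih₀ ih₁ ⊢
      linear_combination -colm + 2 * ih₁ (by omega) - ih₀ (by omega)
  have col_last : 2 * y (n + 1) - 2 * y n = 0 := by simpa using col (Fin.last _)
  have y0 : y 0 = 0 := by
    have h₁ := linear (n + 1) (by omega)
    have h₀ := linear n (by omega)
    push_cast at h₁ h₀
    linarith
  ext k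
  simpa [y0] using linear k k.isLt

theorem vecMul_cartanC_injective {n : ℕ} (hn : 2 ≤ n) :
    Function.Injective (· ᵥ* CartanC n) := fun x y (h : x ᵥ* CartanC n = y ᵥ* CartanC n) =>
  sub_eq_zero.mp (eq_zero_of_vecMul_cartanC_eq_zero hn (by rw [sub_vecMul, h, sub_self]))

def longFundamentalCoweight (n : ℕ) : Fin n → ℤ := fun j => if (j : ℕ) = n - 1 then 1 else 0

theorem eq_zero_or_eq_one_of_dominant {n : ℕ} {c : Fin n → ℤ} (hc : ∀ k, c k = 0 ∨ c k = 1)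
    (hdom : ∀ j, 0 ≤ (longFundamentalCoweight n + c ᵥ* CartanC n) j) : c = 0 ∨ c = 1 := by
  obtain ⟨y, rfl⟩ := exists_eq_comp_val c
  have col (j : Fin n) := hdom j
  simp only [Pi.add_apply, longFundamentalCoweight, vecMul_cartanC_apply] at col
  beta_reduce at hc
  have step (m : ℕ) (hm : m + 1 < n) : y m = y (m + 1) := by
    have h₀ := col ⟨m, by omega⟩
    have h₁ := col ⟨m + 1, hm⟩
    have y₀ := hc ⟨m, by omega⟩
    have y₁ := hc ⟨m + 1, hm⟩
    have y_pred := hc ⟨m - 1, by omega⟩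
    have y₂ := fun h : m + 1 + 1 < n => hc ⟨m + 1 + 1, h⟩
    simp only [Nat.add_sub_cancel] at h₀ h₁ y₀ y₁ y_pred y₂
    split_ifs at h₀ h₁ <;> omega
  have const : ∀ m < n, y m = y 0 := by
    intro m hm
    induction m with
    | zero => rfl
    | succ m ih => rw [← step m hm, ih (by omega)]
  by_cases hzero : ∃ k : Fin n, y k = 0
  · obtain ⟨k, hk⟩ := hzero
    have y0 : y 0 = 0 := (const k k.isLt).symm.trans hk
    exact Or.inl (funext fun l => by simp [const l l.isLt, y0])
  · exact Or.inr (funext fun l => (hc l).resolve_left fun h => hzero ⟨l, h⟩)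

/-- In the dominance order on dominant coweights of the root system `C_n`
(`n ≥ 2`), written in fundamental-coweight coordinates, the pair `λ = ω̌_n` (the
fundamental coweight at the long node) and `μ = λ + α̌_s`, where
`α̌_s = α̌₁ + ⋯ + α̌_n` is the short dominant coroot of `C_n`, is a minimal
degeneration: `μ` is dominant, `λ < μ`, and every dominant `ν` with `λ ≤ ν ≤ μ` equals
`λ` or `μ`. -/
theorem minimal_degeneration_Cn_case_three
    (n : ℕ) (hn : 2 ≤ n) :
    -- λ = ω̌_n, μ = λ + α̌_s with α̌_s = ∑ᵢ α̌ᵢ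
    (∀ j : Fin n,
        0 ≤ ((fun j : Fin n => if (j : ℕ) = n - 1 then (1 : ℤ) else 0) + ∑ i, CartanC n i) j) ∧
    (∃ c : Fin n → ℕ,
        (fun j : Fin n => if (j : ℕ) = n - 1 then (1 : ℤ) else 0) + ∑ i, CartanC n i =
          (fun j : Fin n => if (j : ℕ) = n - 1 then (1 : ℤ) else 0) +
            ∑ k, (c k : ℤ) • CartanC n k) ∧
    (fun j : Fin n => if (j : ℕ) = n - 1 then (1 : ℤ) else 0) ≠
      (fun j : Fin n => if (j : ℕ) = n - 1 then (1 : ℤ) else 0) + ∑ i, CartanC n i ∧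
    (∀ ν : Fin n → ℤ, (∀ j, 0 ≤ ν j) →
      (∃ c : Fin n → ℕ,
        ν = (fun j : Fin n => if (j : ℕ) = n - 1 then (1 : ℤ) else 0) +
          ∑ k, (c k : ℤ) • CartanC n k) →
      (∃ c : Fin n → ℕ,
        (fun j : Fin n => if (j : ℕ) = n - 1 then (1 : ℤ) else 0) + ∑ i, CartanC n i =
          ν + ∑ k, (c k : ℤ) • CartanC n k) →
      ν = (fun j : Fin n => if (j : ℕ) = n - 1 then (1 : ℤ) else 0) ∨
      ν = (fun j : Fin n => if (j : ℕ) = n - 1 then (1 : ℤ) else 0) + ∑ i, CartanC n i) := by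
  have hsum := sum_cartanC hn
  refine ⟨?_, ⟨1, by simp⟩, ?_, ?_⟩
  · intro j
    rw [hsum]
    simp only [Pi.add_apply]
    split_ifs <;> omega
  · intro h
    have := congrFun h ⟨0, by omega⟩
    simp [hsum] at this
  · rintro ν hν ⟨c, rfl⟩ ⟨d, hd⟩
    simp only [← vecMul_eq_sum, ← one_vecMul] at hν hd ⊢
    rw [add_assoc, add_right_inj, ← add_vecMul] at hd
    have hcd : (fun k => (c k : ℤ)) + (fun k => (d k : ℤ)) = 1 :=
      (vecMul_cartanC_injective hn hd).symm
    have hc01 (k : Fin n) : (c k : ℤ) = 0 ∨ (c k : ℤ) = 1 := by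
      have := congrFun hcd k
      simp only [Pi.add_apply, Pi.one_apply] at this
      omega
    rcases eq_zero_or_eq_one_of_dominant hc01 hν with h | h
    · left
      simp [h]
    · right
      rw [h]
end
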